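/- arXiv:1907.11422 — 2 statements merged into one kernel-verified Lean document; each statement's English description precedes it below -/
import Mathlib

section
/- Fix a real Δ > 5 and vertices x, y ∈ V; set D_{−1} = 0 and D_i = W(x, y) · ∑_{j=0}^{i} Δ^j for i ≥ 0. Let 0 ≤ i ≤ k−1 with A_i ≠ ∅, and suppose d_G(x, y) ≤ D_i and d_H(x, p_i(x)) ≤ (3Δ/(Δ−5)) · D_{i−1}. Let m = max{Δ · D_{i−1}, d_G(x, y)}. Then at least one of the following holds: (1) d_H(x, y) ≤ (3 + 16/(Δ−5)) · m; or (2) A_{i+1} ≠ ∅ and d_H(x, p_{i+1}(x)) ≤ (4Δ/(Δ−5)) · D_i. -/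
/-!
Let `u = p_i(x)` and let `l ≥ i` be the level of `u`, so `u ∈ A_l \ A_{l+1}`. The pivot
`z = p_l(y)` is joined to `y` in `H` by a path of length at most `d_G(y, u) ≤ d_G(x, y) + r`,
where `r = d_H(x, u)`, so `d_G(u, z) ≤ 2 (d_G(x, y) + r)`. If `z` lies in the half-bunch of `u`,
the route `x → u → z → y` in `H` has length at most `4 r + 3 d_G(x, y)`. Otherwise some
`a ∈ A_{l+1} ⊆ A_{i+1}` satisfies `d_G(u, a) ≤ 2 d_G(u, z)`, and the pivot `p_{i+1}(x)`, which
`H` reaches from `x` within `d_G(x, A_{i+1}) ≤ d_G(x, a)`, is at `H`-distance at most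
`5 r + 4 d_G(x, y)`. Both bounds turn into the stated ones since `Δ D_{i-1} ≤ D_i`.

With zero-weight edges `x` may differ from its pivot `p_j(x)` even when `x ∈ A_j`; that the
`H`-distance is then still `0` is shown by descending induction on the level.
-/

open scoped ENNReal Classical

namespace ASP

variable {V : Type*}

noncomputable def wWeight {G : SimpleGraph V} (w : V → V → ℝ≥0∞) {x y : V}
    (p : G.Walk x y) : ℝ≥0∞ :=
  (p.darts.map fun d => w d.toProd.1 d.toProd.2).sum

noncomputable def gdist (G : SimpleGraph V) (w : V → V → ℝ≥0∞) (x y : V) : ℝ≥0∞ :=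
  ⨅ p : G.Walk x y, wWeight w p

noncomputable def maxW {G : SimpleGraph V} (w : V → V → ℝ≥0∞) {x y : V}
    (p : G.Walk x y) : ℝ≥0∞ :=
  (p.darts.map fun d => w d.toProd.1 d.toProd.2).foldr max 0

/-- The half-bunch of a vertex `u` of level `i`: all vertices of `A i` closer to `u` than half
the distance from `u` to `A (i+1)` (vacuously all of `A i` if `A (i+1) = ∅`), together with the
pivots of all nonempty higher levels. -/
def halfBunch (G : SimpleGraph V) (w : V → V → ℝ≥0∞) (A : ℕ → Set V) (pv : ℕ → V → V)
    (k i : ℕ) (u : V) : Set V :=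
  {v | v ∈ A i ∧ ∀ a ∈ A (i + 1), gdist G w u v < gdist G w u a / 2} ∪
    {v | ∃ j, i < j ∧ j < k ∧ (A j).Nonempty ∧ v = pv j u}

/-- The spanner `H`: the subgraph of `G` which is the union of the fixed shortest paths `P u v`
over all `u ∈ A i \ A (i+1)` and `v` in the half-bunch of `u`. -/
def spanGraph (G : SimpleGraph V) (w : V → V → ℝ≥0∞) (A : ℕ → Set V) (pv : ℕ → V → V)
    (k : ℕ) (P : ∀ u v : V, G.Walk u v) : SimpleGraph V where
  Adj a b := ∃ u v i, u ∈ A i ∧ u ∉ A (i + 1) ∧ v ∈ halfBunch G w A pv k i u ∧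
      s(a, b) ∈ (P u v).edges
  symm := by
    constructor
    rintro a b ⟨u, v, i, h1, h2, h3, he⟩
    exact ⟨u, v, i, h1, h2, h3, by rwa [Sym2.eq_swap] at he⟩
  loopless := by
    constructor
    rintro a ⟨u, v, i, _, _, _, he⟩
    exact ((P u v).adj_of_mem_edges he).ne rfl

section Distance

variable {G : SimpleGraph V} (w : V → V → ℝ≥0∞)

lemma gdist_le_wWeight {x y : V} (p : G.Walk x y) : gdist G w x y ≤ wWeight w p :=
  iInf_le _ p

@[simp] lemma gdist_self (x : V) : gdist G w x x = 0 :=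
  nonpos_iff_eq_zero.1 <| by simpa [wWeight] using gdist_le_wWeight w (.nil : G.Walk x x)

lemma wWeight_append {x y z : V} (p : G.Walk x y) (q : G.Walk y z) :
    wWeight w (p.append q) = wWeight w p + wWeight w q := by
  simp [wWeight, SimpleGraph.Walk.darts_append]

lemma gdist_triangle (x y z : V) : gdist G w x z ≤ gdist G w x y + gdist G w y z := by
  simp only [gdist, ENNReal.iInf_add, ENNReal.add_iInf]
  refine le_iInf fun p => le_iInf fun q => ?_
  rw [← wWeight_append]
  exact gdist_le_wWeight w _

variable {w} in
lemma wWeight_reverse (hw : ∀ u v, G.Adj u v → w u v = w v u) {x y : V} (p : G.Walk x y) :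
    wWeight w p.reverse = wWeight w p := by
  rw [wWeight, wWeight, SimpleGraph.Walk.darts_reverse, List.map_reverse, List.sum_reverse,
    List.map_map]
  exact congrArg _ (List.map_congr_left fun d _ => (hw _ _ d.adj).symm)

variable {w} in
lemma gdist_comm (hw : ∀ u v, G.Adj u v → w u v = w v u) (x y : V) :
    gdist G w x y = gdist G w y x := by
  have key : ∀ a b : V, gdist G w a b ≤ gdist G w b a := fun a b =>
    le_iInf fun p => wWeight_reverse hw p ▸ gdist_le_wWeight w p.reverse
  exact le_antisymm (key x y) (key y x)

lemma wWeight_transfer {H : SimpleGraph V} {x y : V} (p : G.Walk x y)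
    (hp : ∀ e ∈ p.edges, e ∈ H.edgeSet) : wWeight w (p.transfer H hp) = wWeight w p := by
  induction p with
  | nil => simp [wWeight]
  | cons h q ih =>
    simp only [SimpleGraph.Walk.transfer, wWeight, SimpleGraph.Walk.darts_cons, List.map_cons,
      List.sum_cons] at *
    exact congrArg (w _ _ + ·) (ih _)

lemma gdist_le_gdist_of_le {H : SimpleGraph V} (hle : H ≤ G) (x y : V) :
    gdist G w x y ≤ gdist H w x y :=
  le_iInf fun p =>
    have hp : ∀ e ∈ p.edges, e ∈ G.edgeSet := fun _ he =>
      SimpleGraph.edgeSet_mono hle (p.edges_subset_edgeSet he)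
    wWeight_transfer w p hp ▸ gdist_le_wWeight w (p.transfer G hp)

lemma gdist_eq_zero_trans {x y z : V} (hxy : gdist G w x y = 0) (hyz : gdist G w y z = 0) :
    gdist G w x z = 0 :=
  nonpos_iff_eq_zero.1 <| (gdist_triangle w x y z).trans_eq (by rw [hxy, hyz, add_zero])

end Distance

lemma exists_le_lt_and_not_succ {p : ℕ → Prop} {m n : ℕ} (hmn : m ≤ n) (hm : p m)
    (hn : ¬ p n) : ∃ l, m ≤ l ∧ l < n ∧ p l ∧ ¬ p (l + 1) := by
  induction n, hmn using Nat.le_induction with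
  | base => exact absurd hm hn
  | succ n hmn ih =>
    by_cases hpn : p n
    · exact ⟨n, hmn, n.lt_succ_self, hpn, hn⟩
    · obtain ⟨l, hml, hln, hpl, hpl'⟩ := ih hpn
      exact ⟨l, hml, hln.trans n.lt_succ_self, hpl, hpl'⟩

lemma lt_of_mem_of_eq_empty {A : ℕ → Set V} (hA : Antitone A) {k j : ℕ} (hAk : A k = ∅)
    {a : V} (ha : a ∈ A j) : j < k := by
  by_contra! hkj
  simpa [hAk] using hA hkj ha

def IsPivotMap (G : SimpleGraph V) (w : V → V → ℝ≥0∞) (A : ℕ → Set V) (k : ℕ)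
    (pv : ℕ → V → V) : Prop :=
  ∀ i < k, ∀ v : V, (A i).Nonempty →
    pv i v ∈ A i ∧ ∀ a ∈ A i, gdist G w v (pv i v) ≤ gdist G w v a

def IsHalfBunchSpanner (G H : SimpleGraph V) (w : V → V → ℝ≥0∞) (A : ℕ → Set V)
    (pv : ℕ → V → V) (k : ℕ) : Prop :=
  ∀ ⦃u v : V⦄ ⦃l : ℕ⦄, u ∈ A l → u ∉ A (l + 1) → v ∈ halfBunch G w A pv k l u →
    gdist H w u v ≤ gdist G w u v

section Spanner

variable {G : SimpleGraph V} {w : V → V → ℝ≥0∞} {A : ℕ → Set V} {pv : ℕ → V → V} {k : ℕ}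

lemma spanGraph_le (P : ∀ u v : V, G.Walk u v) : spanGraph G w A pv k P ≤ G := by
  rintro a b ⟨u, v, i, -, -, -, he⟩
  exact (P u v).adj_of_mem_edges he

lemma isHalfBunchSpanner_spanGraph {P : ∀ u v : V, G.Walk u v}
    (hP : ∀ u v l, u ∈ A l → u ∉ A (l + 1) → v ∈ halfBunch G w A pv k l u →
      wWeight w (P u v) = gdist G w u v) :
    IsHalfBunchSpanner G (spanGraph G w A pv k P) w A pv k := by
  intro u v l hu hu' hv
  have hedges : ∀ e ∈ (P u v).edges, e ∈ (spanGraph G w A pv k P).edgeSet := by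
    intro e he
    induction e with
    | _ a b => exact ⟨u, v, l, hu, hu', hv, he⟩
  calc gdist (spanGraph G w A pv k P) w u v ≤ wWeight w ((P u v).transfer _ hedges) :=
        gdist_le_wWeight w _
    _ = gdist G w u v := (wWeight_transfer w _ _).trans (hP u v l hu hu' hv)

variable {H : SimpleGraph V}

lemma exists_mem_succ_gdist_eq_zero (hpv : IsPivotMap G w A k pv)
    (hH : IsHalfBunchSpanner G H w A pv k) (hA : Antitone A) (hAk : A k = ∅) {n : ℕ} {s a : V}
    (hs : s ∈ A n) (ha : a ∈ A (n + 1)) (hsa : gdist G w s a = 0) :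
    ∃ z ∈ A (n + 1), gdist G w s z = 0 ∧ gdist H w s z = 0 := by
  by_cases hs' : s ∈ A (n + 1)
  · exact ⟨s, hs', gdist_self w s, gdist_self w s⟩
  have hn : n + 1 < k := lt_of_mem_of_eq_empty hA hAk ha
  obtain ⟨hz, hzmin⟩ := hpv (n + 1) hn s ⟨a, ha⟩
  have hsz : gdist G w s (pv (n + 1) s) = 0 := nonpos_iff_eq_zero.1 (hsa ▸ hzmin a ha)
  refine ⟨_, hz, hsz, nonpos_iff_eq_zero.1 ?_⟩
  exact hsz ▸ hH hs hs' (Or.inr ⟨n + 1, n.lt_succ_self, hn, ⟨a, ha⟩, rfl⟩)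

lemma gdist_eq_zero_of_gdist_eq_zero (hw : ∀ u v, G.Adj u v → w u v = w v u) (hHG : H ≤ G)
    (hpv : IsPivotMap G w A k pv) (hH : IsHalfBunchSpanner G H w A pv k) (hA : Antitone A)
    (hAk : A k = ∅) {n : ℕ} {s s' : V} (hs : s ∈ A n) (hs' : s' ∈ A n)
    (hss' : gdist G w s s' = 0) : gdist H w s s' = 0 := by
  induction hkn : k - n generalizing n s s' with
  | zero => simpa [hAk] using hA (Nat.sub_eq_zero_iff_le.1 hkn) hs
  | succ t ih =>
    by_cases hfar : ∀ a ∈ A (n + 1), gdist G w s a ≠ 0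
    · have hsl : s ∉ A (n + 1) := fun h => hfar s h (gdist_self w s)
      have hmem : s' ∈ halfBunch G w A pv k n s :=
        Or.inl ⟨hs', fun a ha => hss' ▸ ENNReal.div_pos (hfar a ha) ENNReal.ofNat_ne_top⟩
      exact nonpos_iff_eq_zero.1 (hss' ▸ hH hs hsl hmem)
    push Not at hfar
    obtain ⟨a, ha, hsa⟩ := hfar
    have hs'a : gdist G w s' a = 0 := gdist_eq_zero_trans w (gdist_comm hw s s' ▸ hss') hsa
    obtain ⟨z, hz, hsz, hHsz⟩ := exists_mem_succ_gdist_eq_zero hpv hH hA hAk hs ha hsa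
    obtain ⟨z', hz', hs'z', hHs'z'⟩ := exists_mem_succ_gdist_eq_zero hpv hH hA hAk hs' ha hs'a
    have hzz' : gdist G w z z' = 0 :=
      gdist_eq_zero_trans w (gdist_eq_zero_trans w (gdist_comm hw s z ▸ hsz) hss') hs'z'
    have hHzz' : gdist H w z z' = 0 := ih hz hz' hzz' (by omega)
    have hHz's' : gdist H w z' s' = 0 := gdist_comm (fun u v h => hw u v (hHG h)) s' z' ▸ hHs'z'
    exact gdist_eq_zero_trans w (gdist_eq_zero_trans w hHsz hHzz') hHz's'

lemma gdist_pivot_le (hw : ∀ u v, G.Adj u v → w u v = w v u) (hHG : H ≤ G)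
    (hpv : IsPivotMap G w A k pv) (hH : IsHalfBunchSpanner G H w A pv k) (hA : Antitone A)
    (hA0 : A 0 = Set.univ) (hAk : A k = ∅) (x : V) {j : ℕ} {a : V} (ha : a ∈ A j) :
    gdist H w x (pv j x) ≤ gdist G w x a := by
  have hj : j < k := lt_of_mem_of_eq_empty hA hAk ha
  obtain ⟨hpA, hpmin⟩ := hpv j hj x ⟨a, ha⟩
  by_cases hx : x ∈ A j
  · have h0 : gdist G w x (pv j x) = 0 := nonpos_iff_eq_zero.1 (by simpa using hpmin x hx)
    rw [gdist_eq_zero_of_gdist_eq_zero hw hHG hpv hH hA hAk hx hpA h0]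
    exact zero_le
  · obtain ⟨l, -, hlj, hxl, hxl'⟩ :=
      exists_le_lt_and_not_succ (p := (x ∈ A ·)) j.zero_le (hA0 ▸ Set.mem_univ x) hx
    exact (hH hxl hxl' (Or.inr ⟨j, hlj, hj, ⟨a, ha⟩, rfl⟩)).trans (hpmin a ha)

lemma gdist_pivot_le_gdist_add (hw : ∀ u v, G.Adj u v → w u v = w v u) (hHG : H ≤ G)
    (hpv : IsPivotMap G w A k pv) (hH : IsHalfBunchSpanner G H w A pv k) (hA : Antitone A)
    (hA0 : A 0 = Set.univ) (hAk : A k = ∅) (x y : V) {l : ℕ} {u : V} (hul : u ∈ A l) :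
    gdist H w y (pv l y) ≤ gdist G w x y + gdist H w x u ∧
      gdist G w u (pv l y) ≤ 2 * (gdist G w x y + gdist H w x u) := by
  have hyu : gdist G w y u ≤ gdist G w x y + gdist H w x u := by
    grw [gdist_triangle w y x u, gdist_comm hw y x, gdist_le_gdist_of_le w hHG x u]
  have hyz := (gdist_pivot_le hw hHG hpv hH hA hA0 hAk y hul).trans hyu
  refine ⟨hyz, ?_⟩
  grw [gdist_triangle w u y, gdist_comm hw u y, hyu, gdist_le_gdist_of_le w hHG y, hyz, two_mul]

lemma gdist_le_or_gdist_pivot_succ_le (hw : ∀ u v, G.Adj u v → w u v = w v u) (hHG : H ≤ G)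
    (hpv : IsPivotMap G w A k pv) (hH : IsHalfBunchSpanner G H w A pv k) (hA : Antitone A)
    (hA0 : A 0 = Set.univ) (hAk : A k = ∅) {i : ℕ} (hi : i < k) (hAi : (A i).Nonempty)
    (x y : V) :
    gdist H w x y ≤ 4 * gdist H w x (pv i x) + 3 * gdist G w x y ∨
      ((A (i + 1)).Nonempty ∧
        gdist H w x (pv (i + 1) x) ≤ 5 * gdist H w x (pv i x) + 4 * gdist G w x y) := by
  set u := pv i x
  set r := gdist H w x u
  set d := gdist G w x y
  obtain ⟨l, hil, hlk, hul, hul'⟩ := exists_le_lt_and_not_succ (p := (u ∈ A ·)) hi.le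
    (hpv i hi x hAi).1 (by simp [hAk])
  set z := pv l y
  obtain ⟨hyz, huz⟩ := gdist_pivot_le_gdist_add hw hHG hpv hH hA hA0 hAk x y hul
  by_cases hnear : ∀ a ∈ A (l + 1), gdist G w u z < gdist G w u a / 2
  · left
    have hz : z ∈ halfBunch G w A pv k l u := Or.inl ⟨(hpv l hlk y ⟨u, hul⟩).1, hnear⟩
    calc gdist H w x y ≤ gdist H w x u + gdist H w u z + gdist H w z y :=
          (gdist_triangle w x z y).trans (add_le_add_left (gdist_triangle w x u z) _)
      _ ≤ r + 2 * (d + r) + (d + r) := by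
          rw [gdist_comm (fun a b h => hw a b (hHG h)) z y]
          gcongr
          exact (hH hul hul' hz).trans huz
      _ = 4 * r + 3 * d := by ring
  · right
    push Not at hnear
    obtain ⟨a, ha, hua⟩ := hnear
    have hua' : gdist G w u a ≤ 2 * gdist G w u z := by
      rw [mul_comm]
      exact (ENNReal.div_le_iff_le_mul (.inl two_ne_zero) (.inl ENNReal.ofNat_ne_top)).1 hua
    have ha' : a ∈ A (i + 1) := hA (by omega) ha
    refine ⟨⟨a, ha'⟩, ?_⟩
    calc gdist H w x (pv (i + 1) x) ≤ gdist G w x a := gdist_pivot_le hw hHG hpv hH hA hA0 hAk x ha'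
      _ ≤ gdist G w x u + gdist G w u a := gdist_triangle w x u a
      _ ≤ r + 2 * (2 * (d + r)) := by
          gcongr
          · exact gdist_le_gdist_of_le w hHG x u
          · exact hua'.trans (by gcongr)
      _ = 5 * r + 4 * d := by ring

end Spanner

section Arithmetic

variable {Δ : ℝ}

lemma ofReal_mul_add_ofReal_mul_le {α β : ℝ} (hα : 0 ≤ α) (hβ : 0 ≤ β) {a b c : ℝ≥0∞}
    (ha : a ≤ c) (hb : b ≤ c) :
    ENNReal.ofReal α * a + ENNReal.ofReal β * b ≤ ENNReal.ofReal (α + β) * c := by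
  rw [ENNReal.ofReal_add hα hβ, add_mul]
  gcongr

lemma ofReal_mul_ofReal_three_mul_div (hΔ : 5 < Δ) {c : ℝ} (hc : 0 ≤ c) (D : ℝ≥0∞) :
    ENNReal.ofReal c * (ENNReal.ofReal (3 * Δ / (Δ - 5)) * D) =
      ENNReal.ofReal (3 * c / (Δ - 5)) * (ENNReal.ofReal Δ * D) := by
  have hΔ5 : 0 < Δ - 5 := by linarith
  rw [← mul_assoc, ← mul_assoc, ← ENNReal.ofReal_mul hc, ← ENNReal.ofReal_mul (by positivity)]
  congr 2
  field_simp

lemma four_mul_add_three_mul_le (hΔ : 5 < Δ) (D d : ℝ≥0∞) :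
    4 * (ENNReal.ofReal (3 * Δ / (Δ - 5)) * D) + 3 * d ≤
      ENNReal.ofReal (3 + 16 / (Δ - 5)) * max (ENNReal.ofReal Δ * D) d := by
  have hΔ5 : 0 < Δ - 5 := by linarith
  rw [← ENNReal.ofReal_ofNat 4, ← ENNReal.ofReal_ofNat 3,
    ofReal_mul_ofReal_three_mul_div hΔ (by norm_num)]
  refine (ofReal_mul_add_ofReal_mul_le (by positivity) (by norm_num)
    (le_max_left _ _) (le_max_right _ _)).trans ?_
  gcongr ENNReal.ofReal ?_ * _
  rw [add_comm]
  gcongr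
  norm_num

lemma five_mul_add_four_mul_le (hΔ : 5 < Δ) {D D' d : ℝ≥0∞} (hD : ENNReal.ofReal Δ * D ≤ D')
    (hd : d ≤ D') :
    5 * (ENNReal.ofReal (3 * Δ / (Δ - 5)) * D) + 4 * d ≤
      ENNReal.ofReal (4 * Δ / (Δ - 5)) * D' := by
  have hΔ5 : 0 < Δ - 5 := by linarith
  rw [← ENNReal.ofReal_ofNat 5, ← ENNReal.ofReal_ofNat 4,
    ofReal_mul_ofReal_three_mul_div hΔ (by norm_num)]
  refine (ofReal_mul_add_ofReal_mul_le (by positivity) (by norm_num) hD hd).trans ?_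
  gcongr ENNReal.ofReal ?_ * _
  rw [div_add' _ _ _ hΔ5.ne', div_le_div_iff_of_pos_right hΔ5]
  linarith

lemma ofReal_mul_geom_sum_le (hΔ : 0 ≤ Δ) (W : ℝ≥0∞) (i : ℕ) :
    ENNReal.ofReal Δ * (W * ENNReal.ofReal (∑ j ∈ Finset.range i, Δ ^ j)) ≤
      W * ENNReal.ofReal (∑ j ∈ Finset.range (i + 1), Δ ^ j) := by
  rw [mul_left_comm, ← ENNReal.ofReal_mul hΔ, geom_sum_succ, Finset.mul_sum]
  gcongr
  simp

end Arithmetic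

theorem statement13_general (G : SimpleGraph V)
    (w : V → V → ℝ≥0∞) (hwsym : ∀ u v, G.Adj u v → w u v = w v u)
    (k : ℕ) (A : ℕ → Set V) (hA0 : A 0 = Set.univ)
    (hAnest : ∀ i, A (i + 1) ⊆ A i) (hAk : A k = ∅)
    (pv : ℕ → V → V)
    (hpv : ∀ i, i < k → ∀ v : V, (A i).Nonempty →
      pv i v ∈ A i ∧ ∀ a ∈ A i, gdist G w v (pv i v) ≤ gdist G w v a)
    (P : ∀ u v : V, G.Walk u v)
    (hP : ∀ u v i, u ∈ A i → u ∉ A (i + 1) → v ∈ halfBunch G w A pv k i u →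
      (P u v).IsPath ∧ wWeight w (P u v) = gdist G w u v)
    (Δ : ℝ) (hΔ : 5 < Δ) (x y : V) (Wxy : ℝ≥0∞)
    (i : ℕ) (hi : i < k) (hAi : (A i).Nonempty)
    (hclose : gdist G w x y ≤ Wxy * ENNReal.ofReal (∑ j ∈ Finset.range (i + 1), Δ ^ j))
    (hpiv : gdist (spanGraph G w A pv k P) w x (pv i x) ≤
      ENNReal.ofReal (3 * Δ / (Δ - 5)) *
        (Wxy * ENNReal.ofReal (∑ j ∈ Finset.range i, Δ ^ j))) :
    gdist (spanGraph G w A pv k P) w x y ≤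
        ENNReal.ofReal (3 + 16 / (Δ - 5)) *
          max (ENNReal.ofReal Δ * (Wxy * ENNReal.ofReal (∑ j ∈ Finset.range i, Δ ^ j)))
            (gdist G w x y) ∨
      ((A (i + 1)).Nonempty ∧
        gdist (spanGraph G w A pv k P) w x (pv (i + 1) x) ≤
          ENNReal.ofReal (4 * Δ / (Δ - 5)) *
            (Wxy * ENNReal.ofReal (∑ j ∈ Finset.range (i + 1), Δ ^ j))) := by
  have hH : IsHalfBunchSpanner G (spanGraph G w A pv k P) w A pv k :=
    isHalfBunchSpanner_spanGraph fun u v l hu hu' hv => (hP u v l hu hu' hv).2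
  rcases gdist_le_or_gdist_pivot_succ_le hwsym (spanGraph_le P) hpv hH
      (antitone_nat_of_succ_le hAnest) hA0 hAk hi hAi x y with hxy | ⟨hne, hpiv'⟩
  · refine .inl (hxy.trans ?_)
    grw [hpiv]
    exact four_mul_add_three_mul_le hΔ _ _
  · refine .inr ⟨hne, hpiv'.trans ?_⟩
    grw [hpiv]
    exact five_mul_add_four_mul_le hΔ (ofReal_mul_geom_sum_le (by linarith) Wxy i) hclose

/-- Lemma D.4: with `D_{-1} = 0`, `D_i = W(x,y)·∑_{j=0}^{i} Δ^j` and `Δ > 5`, if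
`d_G(x,y) ≤ D_i` and `d_H(x,p_i(x)) ≤ (3Δ/(Δ-5))·D_{i-1}`, then with
`m = max{Δ·D_{i-1}, d_G(x,y)}`, either `d_H(x,y) ≤ (3 + 16/(Δ-5))·m`, or `A_{i+1} ≠ ∅` and
`d_H(x,p_{i+1}(x)) ≤ (4Δ/(Δ-5))·D_i`.  (Here `∑ j ∈ Finset.range i, Δ^j` is `D_{i-1}/W(x,y)`.) -/
theorem statement13 [Fintype V] (G : SimpleGraph V) (hconn : G.Connected)
    (w : V → V → ℝ≥0∞) (hwsym : ∀ u v, G.Adj u v → w u v = w v u)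
    (hwfin : ∀ u v, G.Adj u v → w u v ≠ ⊤)
    (k : ℕ) (hk : 1 ≤ k) (A : ℕ → Set V) (hA0 : A 0 = Set.univ)
    (hAnest : ∀ i, A (i + 1) ⊆ A i) (hAk : A k = ∅)
    (pv : ℕ → V → V)
    (hpv : ∀ i, i < k → ∀ v : V, (A i).Nonempty →
      pv i v ∈ A i ∧ ∀ a ∈ A i, gdist G w v (pv i v) ≤ gdist G w v a)
    (P : ∀ u v : V, G.Walk u v)
    (hP : ∀ u v i, u ∈ A i → u ∉ A (i + 1) → v ∈ halfBunch G w A pv k i u →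
      (P u v).IsPath ∧ wWeight w (P u v) = gdist G w u v)
    (Δ : ℝ) (hΔ : 5 < Δ) (x y : V) (Wxy : ℝ≥0∞)
    (hW : ∃ q : G.Walk x y, q.IsPath ∧ wWeight w q = gdist G w x y ∧ maxW w q = Wxy)
    (i : ℕ) (hi : i < k) (hAi : (A i).Nonempty)
    (hclose : gdist G w x y ≤ Wxy * ENNReal.ofReal (∑ j ∈ Finset.range (i + 1), Δ ^ j))
    (hpiv : gdist (spanGraph G w A pv k P) w x (pv i x) ≤
      ENNReal.ofReal (3 * Δ / (Δ - 5)) *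
        (Wxy * ENNReal.ofReal (∑ j ∈ Finset.range i, Δ ^ j))) :
    gdist (spanGraph G w A pv k P) w x y ≤
        ENNReal.ofReal (3 + 16 / (Δ - 5)) *
          max (ENNReal.ofReal Δ * (Wxy * ENNReal.ofReal (∑ j ∈ Finset.range i, Δ ^ j)))
            (gdist G w x y) ∨
      ((A (i + 1)).Nonempty ∧
        gdist (spanGraph G w A pv k P) w x (pv (i + 1) x) ≤
          ENNReal.ofReal (4 * Δ / (Δ - 5)) *
            (Wxy * ENNReal.ofReal (∑ j ∈ Finset.range (i + 1), Δ ^ j))) :=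
  statement13_general G w hwsym k A hA0 hAnest hAk pv hpv P hP Δ hΔ x y Wxy i hi hAi hclose hpiv

end ASP
end

section
/- There is an absolute constant C such that the following holds. Let G = (V, E, w) be a finite connected undirected graph on n vertices with nonnegative real edge weights, let k ≥ 1 be an integer, set ν = 1/(2^k − 1) and q_i = n^{−2^i·ν} · 2^{−2^i − 1} for 0 ≤ i ≤ k−2. Construct random nested sets by A_0 = V and, for 0 ≤ i ≤ k−2, including each element of A_i in A_{i+1} independently with probability q_i; set A_k = ∅. With bunches B(u) defined from these sets and H = {{u, v} : u ∈ V, v ∈ B(u)}, the expected number of edges of H satisfies E[|H|] ≤ C · (k·n + n^{1+ν}). -/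
/-!
Every edge of `H` joins `u` either to one of its at most `k` pivots or to a vertex `v` with
`u, v ∈ A_i` and `v` strictly closer to `u` than all of `A_{i+1}` (a near pair at level `i`).
Whether a vertex lies in `A_i` depends only on its own column of coins, so events that constrain
each vertex separately have product probabilities. Let `p_i = q_0 ⋯ q_{i-1}` be the probability
of reaching `A_i`. For `i < k - 1`, a pair `u ≠ v` is near only if both reach `A_i` and none of
the `r` vertices at least as close to `u` as `v` reaches `A_{i+1}`, which has probability at most
`4 p_i² (1 - p_{i+1})^r`; ordering the `v` by distance from `u` turns the sum over `v` into a
geometric series, and the level contributes at most `n (1 + 4 p_i / q_i) = n + 16 n^{1+ν} 2^{-i}`.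
At the top level every pair of vertices of `A_{k-1}` is near, contributing `n + (n p_{k-1})²`,
and `ν = 1/(2^k - 1)` is exactly what makes `(n p_{k-1})² ≤ n^{1+ν}`.
-/

open scoped ENNReal Classical

namespace ASP

variable {V : Type*}

/-- The bunch of a vertex `u` of level `i`: all vertices of `A i` strictly closer to `u` than
`A (i+1)` (vacuously all of `A i` if `A (i+1) = ∅`), together with the pivots of all
nonempty higher levels. -/
def bunch (G : SimpleGraph V) (w : V → V → ℝ≥0∞) (A : ℕ → Set V) (pv : ℕ → V → V)
    (k i : ℕ) (u : V) : Set V :=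
  {v | v ∈ A i ∧ ∀ a ∈ A (i + 1), gdist G w u v < gdist G w u a} ∪
    {v | ∃ j, i < j ∧ j < k ∧ (A j).Nonempty ∧ v = pv j u}

/-- The emulator graph `H`: an edge `{u, v}` for every `u ∈ A i \ A (i+1)` and `v ∈ B(u)`. -/
def emulGraph (G : SimpleGraph V) (w : V → V → ℝ≥0∞) (A : ℕ → Set V) (pv : ℕ → V → V)
    (k : ℕ) : SimpleGraph V where
  Adj u v := u ≠ v ∧ ∃ i, (u ∈ A i ∧ u ∉ A (i + 1) ∧ v ∈ bunch G w A pv k i u) ∨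
      (v ∈ A i ∧ v ∉ A (i + 1) ∧ u ∈ bunch G w A pv k i v)
  symm := ⟨fun u v h => ⟨h.1.symm, h.2.imp fun _ hi => hi.symm⟩⟩
  loopless := ⟨fun u h => h.1 rfl⟩


/-- The random hierarchy of sets determined by the coin flips `ω`: `A_0 = V`, and for
`i + 1 < k`, `A_{i+1}` consists of the elements `v ∈ A_i` whose coin `ω i v` came up `true`;
all levels from `k` on are empty. -/
def Asets (k : ℕ) (ω : ℕ → V → Bool) : ℕ → Set V
  | 0 => Set.univ
  | i + 1 => if i + 1 < k then {v | v ∈ Asets k ω i ∧ ω i v = true} else ∅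

/-- Extend a finitely-indexed family of coin flips to all of `ℕ` (by `false`). -/
def extendCoins (k : ℕ) (ω : Fin (k - 1) → V → Bool) : ℕ → V → Bool :=
  fun i v => if h : i < k - 1 then ω ⟨i, h⟩ v else false

/-- The probability of the outcome `ω` when, independently for each level `0 ≤ i ≤ k - 2` and
each vertex `v`, the coin `ω i v` comes up `true` with probability `qs i`. -/
noncomputable def coinProb [Fintype V] (k : ℕ) (qs : ℕ → ℝ)
    (ω : Fin (k - 1) → V → Bool) : ℝ :=
  ∏ i : Fin (k - 1), ∏ v : V, if ω i v = true then qs (i : ℕ) else 1 - qs (i : ℕ)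

open Finset

theorem sum_pow_card_filter_le_le_div {ι α : Type*} [DecidableEq ι] [LinearOrder α] (f : ι → α)
    (s : Finset ι) {x : ℝ} (hx0 : 0 ≤ x) (hx1 : x < 1) :
    ∑ v ∈ s, x ^ #{w ∈ s | f w ≤ f v} ≤ x / (1 - x) := by
  induction s using Finset.induction_on_min_value f with
  | empty => simpa using div_nonneg hx0 (by linarith)
  | insert a s ha hmin ih =>
    have hcard : ∀ v ∈ s, #{w ∈ insert a s | f w ≤ f v} = #{w ∈ s | f w ≤ f v} + 1 := by
      intro v hv
      rw [filter_insert, if_pos (hmin v hv), card_insert_of_notMem (by simp [ha])]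
    have hcard_a : #{w ∈ insert a s | f w ≤ f a} ≠ 0 := card_ne_zero.2 ⟨a, by simp⟩
    rw [sum_insert ha, sum_congr rfl fun v hv => by rw [hcard v hv, pow_succ], ← sum_mul]
    calc _ ≤ x + x / (1 - x) * x :=
          add_le_add (pow_le_of_le_one hx0 hx1.le hcard_a) (mul_le_mul_of_nonneg_right ih hx0)
      _ = x / (1 - x) := by field_simp [(by linarith : (1 - x) ≠ 0)]; ring

theorem pow_le_four_mul_pow {x : ℝ} (hx : 1 / 2 ≤ x) (hx1 : x ≤ 1) {a b : ℕ} (hab : b ≤ a + 2) :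
    x ^ a ≤ 4 * x ^ b :=
  calc x ^ a ≤ 4 * x ^ 2 * x ^ a :=
        le_mul_of_one_le_left (pow_nonneg (by linarith) a) (by nlinarith)
    _ = 4 * x ^ (a + 2) := by ring
    _ ≤ 4 * x ^ b := by gcongr 4 * ?_; exact pow_le_pow_of_le_one (by linarith) hx1 hab

theorem sum_filter_forall_prod_eq_prod_sum {ι β R : Type*} [Fintype ι] [DecidableEq ι]
    [Fintype β] [CommSemiring R] (P : ι → β → Prop) [∀ i, DecidablePred (P i)]
    [DecidablePred fun f : ι → β => ∀ i, P i (f i)] (μ : ι → β → R) :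
    ∑ f ∈ univ.filter fun f : ι → β => ∀ i, P i (f i), ∏ i, μ i (f i) =
      ∏ i, ∑ b ∈ univ.filter (P i), μ i b := by
  rw [prod_univ_sum]
  refine Finset.sum_congr ?_ fun _ _ => rfl
  ext f
  simp [Fintype.mem_piFinset]

theorem sum_mul_card_filter {Ω X R : Type*} [Fintype Ω] [Fintype X] [NonAssocSemiring R]
    (p : Ω → R) (r : Ω → X → Prop) [∀ ω, DecidablePred (r ω)] [∀ x, DecidablePred (r · x)] :
    ∑ ω, p ω * #(univ.filter (r ω)) = ∑ x, ∑ ω ∈ univ.filter (r · x), p ω := by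
  simp_rw [card_filter, Nat.cast_sum, mul_sum, sum_filter]
  rw [sum_comm]
  simp

theorem sum_prod_le_card_mul_of_diag_offDiag {V : Type*} [Fintype V] [DecidableEq V]
    {f : V × V → ℝ} {a b : ℝ} (hdiag : ∀ u, f (u, u) ≤ a)
    (hoff : ∀ u, ∑ v ∈ univ.erase u, f (u, v) ≤ b) :
    ∑ p, f p ≤ Fintype.card V * (a + b) := by
  rw [Fintype.sum_prod_type, ← nsmul_eq_mul, ← card_univ, ← sum_const]
  exact sum_le_sum fun u _ => by
    rw [← add_sum_erase _ _ (mem_univ u)]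
    exact add_le_add (hdiag u) (hoff u)

section Coins

variable {V : Type*} [Fintype V] {m : ℕ} (q : ℕ → ℝ)

def colWeight (c : Fin m → Bool) : ℝ :=
  ∏ j, if c j = true then q j else 1 - q j

theorem sum_colWeight : ∑ c : Fin m → Bool, colWeight q c = 1 := by
  simp only [colWeight]
  rw [← Fintype.prod_sum fun (j : Fin m) (b : Bool) => if b = true then q j else 1 - q j]
  simp

theorem sum_colWeight_prefix {i : ℕ} (hi : i ≤ m) :
    ∑ c ∈ univ.filter fun c : Fin m → Bool => ∀ j : Fin m, (j : ℕ) < i → c j = true,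
      colWeight q c = ∏ j ∈ range i, q j := by
  have hrange : (range m).filter (· < i) = range i := by
    ext j
    simp only [mem_filter, mem_range]
    omega
  refine (sum_filter_forall_prod_eq_prod_sum (fun (j : Fin m) b => (j : ℕ) < i → b = true)
    fun j b => if b = true then q j else 1 - q j).trans ?_
  rw [← hrange, prod_filter, ← Fin.prod_univ_eq_prod_range]
  refine prod_congr rfl fun j _ => ?_
  by_cases hj : (j : ℕ) < i <;> simp [hj, sum_filter]

theorem sum_colWeight_not_prefix {i : ℕ} (hi : i ≤ m) :
    ∑ c with ¬∀ j : Fin m, (j : ℕ) < i → c j = true, colWeight q c =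
      1 - ∏ j ∈ range i, q j := by
  rw [← sum_colWeight_prefix q hi, ← sum_colWeight q (m := m),
    ← sum_filter_add_sum_filter_not univ
      fun c : Fin m → Bool => ∀ j : Fin m, (j : ℕ) < i → c j = true]
  ring

theorem coinProb_eq_prod_colWeight (ω : Fin m → V → Bool) :
    coinProb (m + 1) q ω = ∏ v, colWeight q fun j => ω j v :=
  prod_comm

theorem coinProb_nonneg (hq0 : ∀ j, 0 ≤ q j) (hq1 : ∀ j, q j ≤ 1) (ω : Fin m → V → Bool) :
    0 ≤ coinProb (m + 1) q ω :=
  prod_nonneg fun i _ => prod_nonneg fun v _ => by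
    split_ifs
    · exact hq0 i
    · linarith [hq1 i]

variable [DecidableEq V]

theorem sum_coinProb_forall (P : V → (Fin m → Bool) → Prop) [∀ v, DecidablePred (P v)]
    [DecidablePred fun ω : Fin m → V → Bool => ∀ v, P v (fun j => ω j v)] :
    ∑ ω ∈ univ.filter fun ω : Fin m → V → Bool => ∀ v, P v (fun j => ω j v),
        coinProb (m + 1) q ω = ∏ v, ∑ c ∈ univ.filter (P v), colWeight q c := by
  rw [← sum_filter_forall_prod_eq_prod_sum]
  exact sum_equiv (Equiv.piComm _) (by simp [Equiv.piComm, mem_filter])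
    fun ω _ => coinProb_eq_prod_colWeight q ω

theorem sum_coinProb : ∑ ω : Fin m → V → Bool, coinProb (m + 1) q ω = 1 := by
  simpa [sum_colWeight] using sum_coinProb_forall q (V := V) (m := m) fun _ _ => True

theorem sum_coinProb_filter_mono (hq0 : ∀ j, 0 ≤ q j) (hq1 : ∀ j, q j ≤ 1)
    {E E' : (Fin m → V → Bool) → Prop} [DecidablePred E] [DecidablePred E']
    (h : ∀ ω, E ω → E' ω) :
    ∑ ω ∈ univ.filter E, coinProb (m + 1) q ω ≤ ∑ ω ∈ univ.filter E', coinProb (m + 1) q ω :=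
  sum_le_sum_of_subset_of_nonneg (monotone_filter_right _ fun ω _ => h ω)
    fun ω _ _ => coinProb_nonneg q hq0 hq1 ω

theorem sum_coinProb_filter_le_one (hq0 : ∀ j, 0 ≤ q j) (hq1 : ∀ j, q j ≤ 1)
    (E : (Fin m → V → Bool) → Prop) [DecidablePred E] :
    ∑ ω ∈ univ.filter E, coinProb (m + 1) q ω ≤ 1 :=
  (sum_le_sum_of_subset_of_nonneg (filter_subset _ _)
    fun ω _ _ => coinProb_nonneg q hq0 hq1 ω).trans_eq (sum_coinProb q)

end Coins

section Levels

variable {V : Type*} {m : ℕ}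

theorem mem_Asets_extendCoins_iff (ω : Fin m → V → Bool) {i : ℕ} (hi : i ≤ m) (x : V) :
    x ∈ Asets (m + 1) (extendCoins (m + 1) ω) i ↔ ∀ j : Fin m, (j : ℕ) < i → ω j x = true := by
  induction i with
  | zero => simp [Asets]
  | succ i ih =>
    have him : i < m := by omega
    simp only [Asets, if_pos (by omega : i + 1 < m + 1), Set.mem_ofPred_eq, ih him.le,
      extendCoins, dif_pos (by omega : i < m + 1 - 1)]
    constructor
    · rintro ⟨h, hi⟩ j hj
      rcases Nat.lt_succ_iff_lt_or_eq.1 hj with hj | hj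
      · exact h j hj
      · obtain rfl : j = ⟨i, him⟩ := Fin.ext hj
        exact hi
    · intro h
      exact ⟨fun j hj => h j (by omega), h ⟨i, him⟩ (by simp)⟩

theorem Asets_eq_empty_of_le {k i : ℕ} (ω : ℕ → V → Bool) (hk : 0 < k) (h : k ≤ i) :
    Asets k ω i = ∅ := by
  obtain ⟨i, rfl⟩ : ∃ i', i = i' + 1 := ⟨i - 1, by omega⟩
  exact if_neg (by omega)

theorem sum_coinProb_mem_level_notMem_level [Fintype V] [DecidableEq V] (q : ℕ → ℝ) {i i' : ℕ}
    (hi : i ≤ m) (hi' : i' ≤ m) {T S : Finset V} (hTS : Disjoint T S) :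
    ∑ ω ∈ univ.filter fun ω : Fin m → V → Bool =>
        (∀ x ∈ T, x ∈ Asets (m + 1) (extendCoins (m + 1) ω) i) ∧
          ∀ x ∈ S, x ∉ Asets (m + 1) (extendCoins (m + 1) ω) i',
      coinProb (m + 1) q ω = (∏ j ∈ range i, q j) ^ #T * (1 - ∏ j ∈ range i', q j) ^ #S := by
  let P : V → (Fin m → Bool) → Prop := fun x c =>
    (x ∈ T → ∀ j : Fin m, (j : ℕ) < i → c j = true) ∧
      (x ∈ S → ¬∀ j : Fin m, (j : ℕ) < i' → c j = true)
  have hfilter : (univ.filter fun ω : Fin m → V → Bool =>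
      (∀ x ∈ T, x ∈ Asets (m + 1) (extendCoins (m + 1) ω) i) ∧
        ∀ x ∈ S, x ∉ Asets (m + 1) (extendCoins (m + 1) ω) i') =
      univ.filter fun ω => ∀ x, P x fun j => ω j x := by
    ext ω
    simp [P, mem_Asets_extendCoins_iff ω hi, mem_Asets_extendCoins_iff ω hi', forall_and]
  have hfactor : ∀ x, ∑ c ∈ univ.filter (P x), colWeight q c =
      (if x ∈ T then ∏ j ∈ range i, q j else 1) *
        (if x ∈ S then 1 - ∏ j ∈ range i', q j else 1) := by
    intro x
    by_cases hT : x ∈ T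
    · have hS : x ∉ S := disjoint_left.1 hTS hT
      simp [P, hT, hS, sum_colWeight_prefix q hi]
    · by_cases hS : x ∈ S
      · simp only [P, hT, hS, false_implies, true_implies, true_and, if_false, if_true, one_mul]
        exact sum_colWeight_not_prefix q hi'
      · simp [P, hT, hS, sum_colWeight]
  rw [hfilter, sum_coinProb_forall, prod_congr rfl fun x _ => hfactor x, prod_mul_distrib,
    prod_ite_mem, prod_ite_mem, univ_inter, univ_inter, prod_const, prod_const]

end Levels

section EdgeCount

variable {V : Type*}

def NearAtLevel {α : Type*} [LinearOrder α] (d : V → V → α) (A : ℕ → Set V) (i : ℕ)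
    (u v : V) : Prop :=
  u ∈ A i ∧ v ∈ A i ∧ ∀ a ∈ A (i + 1), d u v < d u a

theorem ncard_edgeSet_emulGraph_le [Fintype V] (G : SimpleGraph V) (w : V → V → ℝ≥0∞)
    (A : ℕ → Set V) (pv : ℕ → V → V) (k : ℕ) (hA : ∀ i, k ≤ i → A i = ∅) :
    (emulGraph G w A pv k).edgeSet.ncard ≤ k * Fintype.card V +
      ∑ i ∈ range k, #(univ.filter fun p : V × V => NearAtLevel (gdist G w) A i p.1 p.2) := by
  set pivotEdges : Finset (Sym2 V) :=
    (range k ×ˢ univ).image fun p : ℕ × V => s(p.2, pv p.1 p.2)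
  set nearEdges : Finset (Sym2 V) := (range k).biUnion fun i =>
    (univ.filter fun p : V × V => NearAtLevel (gdist G w) A i p.1 p.2).image
      fun p => s(p.1, p.2)
  have hbunch : ∀ i u v, u ∈ A i → v ∈ bunch G w A pv k i u →
      s(u, v) ∈ pivotEdges ∪ nearEdges := by
    rintro i u v hu (⟨hv, hnear⟩ | ⟨j, -, hj, -, rfl⟩)
    · have hik : i < k := by
        by_contra h
        simp [hA i (by omega)] at hu
      refine mem_union_right _
        (mem_biUnion.2 ⟨i, mem_range.2 hik, mem_image.2 ⟨(u, v), ?_, rfl⟩⟩)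
      exact mem_filter.2 ⟨mem_univ _, hu, hv, hnear⟩
    · exact mem_union_left _ (mem_image.2 ⟨(j, u), by simp [hj], rfl⟩)
  have hsub : (emulGraph G w A pv k).edgeSet ⊆ ↑(pivotEdges ∪ nearEdges) := by
    intro e he
    induction e using Sym2.ind with
    | _ u v =>
      obtain ⟨-, i, ⟨hu, -, hv⟩ | ⟨hv, -, hu⟩⟩ := he
      · exact hbunch i u v hu hv
      · rw [Sym2.eq_swap]
        exact hbunch i v u hv hu
  calc (emulGraph G w A pv k).edgeSet.ncard ≤ #(pivotEdges ∪ nearEdges) := by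
        rw [← Set.ncard_coe_finset]
        exact Set.ncard_le_ncard hsub
    _ ≤ #pivotEdges + #nearEdges := card_union_le _ _
    _ ≤ _ := add_le_add (card_image_le.trans (by simp))
        (card_biUnion_le.trans (sum_le_sum fun i _ => card_image_le))

end EdgeCount

section Expectation

variable {V : Type*} [Fintype V] [DecidableEq V] {m : ℕ} (q : ℕ → ℝ)
  {α : Type*} [LinearOrder α] (d : V → V → α)

theorem sum_coinProb_nearAtLevel_le (hq0 : ∀ j, 0 ≤ q j) (hq1 : ∀ j, q j ≤ 1) {i : ℕ}
    (hi : i < m) {u v : V} (huv : u ≠ v) :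
    ∑ ω ∈ univ.filter fun ω => NearAtLevel d (Asets (m + 1) (extendCoins (m + 1) ω)) i u v,
        coinProb (m + 1) q ω ≤
      (∏ j ∈ range i, q j) ^ 2 *
        (1 - ∏ j ∈ range (i + 1), q j) ^ #(univ.filter (fun x => d u x ≤ d u v) \ {u, v}) := by
  rw [← card_pair huv, ← sum_coinProb_mem_level_notMem_level q hi.le hi disjoint_sdiff]
  refine sum_coinProb_filter_mono (V := V) (m := m) q hq0 hq1 fun ω hω => ?_
  obtain ⟨hu, hv, hnear⟩ := hω
  refine ⟨by simpa [hu] using hv, fun x hx hxA => ?_⟩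
  exact (mem_filter.1 (mem_sdiff.1 hx).1).2.not_gt (hnear x hxA)

theorem sum_coinProb_nearAtLevel_top_le (hq0 : ∀ j, 0 ≤ q j) (hq1 : ∀ j, q j ≤ 1) {u v : V}
    (huv : u ≠ v) :
    ∑ ω ∈ univ.filter fun ω => NearAtLevel d (Asets (m + 1) (extendCoins (m + 1) ω)) m u v,
        coinProb (m + 1) q ω ≤ (∏ j ∈ range m, q j) ^ 2 := by
  have h := sum_coinProb_mem_level_notMem_level (V := V) q (le_refl m) (le_refl m)
    (disjoint_empty_right {u, v})
  rw [card_pair huv, card_empty, pow_zero, mul_one] at h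
  rw [← h]
  refine sum_coinProb_filter_mono (V := V) (m := m) q hq0 hq1 fun ω hω => ?_
  obtain ⟨hu, hv, -⟩ := hω
  exact ⟨by simpa [hu] using hv, by simp⟩

theorem sum_erase_sum_coinProb_nearAtLevel_le (hq0 : ∀ j, 0 < q j) (hq2 : ∀ j, q j ≤ 1 / 2)
    {i : ℕ} (hi : i < m) (u : V) :
    ∑ v ∈ univ.erase u, ∑ ω ∈ univ.filter fun ω =>
        NearAtLevel d (Asets (m + 1) (extendCoins (m + 1) ω)) i u v, coinProb (m + 1) q ω ≤
      4 * (∏ j ∈ range i, q j) ^ 2 / ∏ j ∈ range (i + 1), q j := by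
  have hq0' : ∀ j, 0 ≤ q j := fun j => (hq0 j).le
  have hq1 : ∀ j, q j ≤ 1 := fun j => (hq2 j).trans (by norm_num)
  set p := ∏ j ∈ range i, q j
  set t := ∏ j ∈ range (i + 1), q j
  have ht0 : 0 < t := prod_pos fun j _ => hq0 j
  have ht2 : t ≤ 1 / 2 := by
    rw [show t = p * q i from prod_range_succ _ _]
    exact (mul_le_of_le_one_left (hq0' i)
      (prod_le_one (fun j _ => hq0' j) fun j _ => hq1 j)).trans (hq2 i)
  calc _ ≤ ∑ v ∈ univ.erase u, 4 * p ^ 2 * (1 - t) ^ #(univ.filter fun x => d u x ≤ d u v) :=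
        sum_le_sum fun v hv => (sum_coinProb_nearAtLevel_le q d hq0' hq1 hi
          (ne_of_mem_erase hv).symm).trans (by
            change p ^ 2 * (1 - t) ^ _ ≤ _
            rw [mul_comm 4, mul_assoc]
            gcongr
            exact pow_le_four_mul_pow (by linarith) (by linarith)
              (card_le_card_sdiff_add_card.trans (Nat.add_le_add_left card_le_two _)))
    _ ≤ ∑ v, 4 * p ^ 2 * (1 - t) ^ #(univ.filter fun x => d u x ≤ d u v) :=
        sum_le_sum_of_subset_of_nonneg (erase_subset _ _) fun _ _ _ => by
          have : 0 ≤ 1 - t := by linarith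
          positivity
    _ ≤ 4 * p ^ 2 * ((1 - t) / (1 - (1 - t))) := by
        rw [← mul_sum]
        gcongr
        exact sum_pow_card_filter_le_le_div _ _ (by linarith) (by linarith)
    _ ≤ 4 * p ^ 2 / t := by
        rw [sub_sub_cancel, ← mul_div_assoc]
        exact div_le_div_of_nonneg_right (mul_le_of_le_one_right (by positivity) (by linarith))
          ht0.le

theorem sum_sum_coinProb_nearAtLevel_le (hq0 : ∀ j, 0 < q j) (hq2 : ∀ j, q j ≤ 1 / 2) {i : ℕ}
    (hi : i < m) :
    ∑ p : V × V, ∑ ω ∈ univ.filter fun ω =>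
        NearAtLevel d (Asets (m + 1) (extendCoins (m + 1) ω)) i p.1 p.2, coinProb (m + 1) q ω ≤
      Fintype.card V * (1 + 4 * (∏ j ∈ range i, q j) ^ 2 / ∏ j ∈ range (i + 1), q j) :=
  sum_prod_le_card_mul_of_diag_offDiag
    (fun _ => sum_coinProb_filter_le_one q (fun j => (hq0 j).le)
      (fun j => (hq2 j).trans (by norm_num)) _)
    (sum_erase_sum_coinProb_nearAtLevel_le q d hq0 hq2 hi)

theorem sum_sum_coinProb_nearAtLevel_top_le (hq0 : ∀ j, 0 ≤ q j) (hq1 : ∀ j, q j ≤ 1) :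
    ∑ p : V × V, ∑ ω ∈ univ.filter fun ω =>
        NearAtLevel d (Asets (m + 1) (extendCoins (m + 1) ω)) m p.1 p.2, coinProb (m + 1) q ω ≤
      Fintype.card V * (1 + Fintype.card V * (∏ j ∈ range m, q j) ^ 2) := by
  refine sum_prod_le_card_mul_of_diag_offDiag (V := V)
    (fun _ => sum_coinProb_filter_le_one q hq0 hq1 _) fun u => ?_
  calc _ ≤ ∑ v ∈ univ.erase u, (∏ j ∈ range m, q j) ^ 2 :=
        sum_le_sum fun v hv =>
          sum_coinProb_nearAtLevel_top_le q d hq0 hq1 (ne_of_mem_erase hv).symm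
    _ ≤ ∑ v : V, (∏ j ∈ range m, q j) ^ 2 :=
        sum_le_sum_of_subset_of_nonneg (erase_subset _ _) fun _ _ _ => sq_nonneg _
    _ = Fintype.card V * (∏ j ∈ range m, q j) ^ 2 := by simp

end Expectation

theorem sum_coinProb_mul_ncard_edgeSet_le {V : Type*} [Fintype V] [DecidableEq V] {m : ℕ}
    (q : ℕ → ℝ) (hq0 : ∀ j, 0 < q j) (hq2 : ∀ j, q j ≤ 1 / 2) (G : SimpleGraph V)
    (w : V → V → ℝ≥0∞) (pv : (Fin m → V → Bool) → ℕ → V → V) :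
    ∑ ω : Fin m → V → Bool, coinProb (m + 1) q ω *
        ((emulGraph G w (Asets (m + 1) (extendCoins (m + 1) ω)) (pv ω) (m + 1)).edgeSet.ncard :
          ℝ) ≤
      (m + 1) * Fintype.card V +
        (∑ i ∈ range m, Fintype.card V *
            (1 + 4 * (∏ j ∈ range i, q j) ^ 2 / ∏ j ∈ range (i + 1), q j) +
          Fintype.card V * (1 + Fintype.card V * (∏ j ∈ range m, q j) ^ 2)) := by
  have hq0' : ∀ j, 0 ≤ q j := fun j => (hq0 j).le
  have hq1 : ∀ j, q j ≤ 1 := fun j => (hq2 j).trans (by norm_num)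
  have hedge : ∀ ω : Fin m → V → Bool,
      ((emulGraph G w (Asets (m + 1) (extendCoins (m + 1) ω)) (pv ω) (m + 1)).edgeSet.ncard :
          ℝ) ≤
        (m + 1) * Fintype.card V + ∑ i ∈ range (m + 1), (#(univ.filter fun p : V × V =>
          NearAtLevel (gdist G w) (Asets (m + 1) (extendCoins (m + 1) ω)) i p.1 p.2) : ℝ) := by
    intro ω
    exact_mod_cast ncard_edgeSet_emulGraph_le G w _ (pv ω) (m + 1) fun i =>
      Asets_eq_empty_of_le _ m.succ_pos
  calc _ ≤ ∑ ω : Fin m → V → Bool, coinProb (m + 1) q ω * ((m + 1) * Fintype.card V +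
          ∑ i ∈ range (m + 1), (#(univ.filter fun p : V × V =>
            NearAtLevel (gdist G w) (Asets (m + 1) (extendCoins (m + 1) ω)) i p.1 p.2) : ℝ)) :=
        sum_le_sum fun ω _ => mul_le_mul_of_nonneg_left (hedge ω) (coinProb_nonneg q hq0' hq1 ω)
    _ = (m + 1) * Fintype.card V + ∑ i ∈ range (m + 1), ∑ p : V × V, ∑ ω ∈ univ.filter fun ω =>
          NearAtLevel (gdist G w) (Asets (m + 1) (extendCoins (m + 1) ω)) i p.1 p.2,
            coinProb (m + 1) q ω := by
        simp_rw [mul_add, sum_add_distrib, mul_sum]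
        rw [← sum_mul, sum_coinProb, one_mul, sum_comm]
        simp_rw [sum_mul_card_filter]
        rfl
    _ ≤ _ := by
        rw [sum_range_succ]
        gcongr with i hi
        · exact sum_sum_coinProb_nearAtLevel_le q (gdist G w) hq0 hq2 (mem_range.1 hi)
        · exact sum_sum_coinProb_nearAtLevel_top_le q (gdist G w) hq0' hq1

section Sampling

noncomputable def samplingProb (n ν : ℝ) (i : ℕ) : ℝ :=
  n ^ (-((2 : ℝ) ^ i * ν)) * (2 : ℝ) ^ (-((2 : ℝ) ^ i) - 1)

theorem rpow_two_pow (x : ℝ) (i : ℕ) : x ^ ((2 : ℝ) ^ i) = x ^ 2 ^ i := by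
  rw [← Real.rpow_natCast]
  norm_cast

variable {n : ℝ}

theorem samplingProb_eq (hn : 0 < n) (ν : ℝ) (i : ℕ) :
    samplingProb n ν i = 1 / (2 * (2 * n ^ ν) ^ 2 ^ i) := by
  rw [samplingProb, Real.rpow_sub two_pos, Real.rpow_neg two_pos.le, Real.rpow_neg hn.le,
    mul_comm ((2 : ℝ) ^ i) ν, Real.rpow_mul hn.le, rpow_two_pow, rpow_two_pow, mul_pow,
    Real.rpow_one]
  field_simp

theorem samplingProb_pos (hn : 0 < n) (ν : ℝ) (i : ℕ) : 0 < samplingProb n ν i := by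
  rw [samplingProb_eq hn]
  have := Real.rpow_pos_of_pos hn ν
  positivity

theorem samplingProb_le_half {ν : ℝ} (hn : 1 ≤ n) (hν : 0 ≤ ν) (i : ℕ) :
    samplingProb n ν i ≤ 1 / 2 := by
  rw [samplingProb_eq (by linarith)]
  have hx : 1 ≤ 2 * n ^ ν := by linarith [Real.one_le_rpow hn hν]
  gcongr
  linarith [one_le_pow₀ hx (n := 2 ^ i)]

theorem prod_range_one_div_two_mul_pow_two_pow {y : ℝ} (hy : y ≠ 0) (i : ℕ) :
    ∏ j ∈ range i, 1 / (2 * y ^ 2 ^ j) = y / (2 ^ i * y ^ 2 ^ i) := by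
  induction i with
  | zero => simp [hy]
  | succ i ih =>
    rw [prod_range_succ, ih, Nat.pow_succ, pow_mul]
    field_simp
    ring

theorem sum_range_mul_one_add_samplingProb_le (hn : 0 < n) (ν : ℝ) (m : ℕ) :
    ∑ i ∈ range m, n * (1 + 4 * (∏ j ∈ range i, samplingProb n ν j) ^ 2 /
        ∏ j ∈ range (i + 1), samplingProb n ν j) ≤ m * n + 32 * n ^ (1 + ν) := by
  have hx : 0 < n ^ ν := Real.rpow_pos_of_pos hn ν
  have hterm : ∀ i, 4 * (∏ j ∈ range i, samplingProb n ν j) ^ 2 /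
      ∏ j ∈ range (i + 1), samplingProb n ν j = 16 * n ^ ν * (1 / 2) ^ i := by
    intro i
    simp_rw [samplingProb_eq hn]
    rw [prod_range_one_div_two_mul_pow_two_pow (by positivity),
      prod_range_one_div_two_mul_pow_two_pow (by positivity), Nat.pow_succ, pow_mul, pow_succ,
      one_div_pow]
    field_simp
    ring
  simp_rw [hterm, mul_add, mul_one, sum_add_distrib, sum_const, card_range, nsmul_eq_mul,
    ← mul_sum]
  rw [Real.rpow_add hn, Real.rpow_one]
  have := mul_le_mul_of_nonneg_left (sum_geometric_two_le m) (by positivity : 0 ≤ n * (16 * n ^ ν))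
  linarith

theorem sq_mul_prod_samplingProb_le (hn : 0 < n) (m : ℕ) :
    (n * ∏ j ∈ range m, samplingProb n (1 / ((2 : ℝ) ^ (m + 1) - 1)) j) ^ 2 ≤
      n ^ (1 + 1 / ((2 : ℝ) ^ (m + 1) - 1)) := by
  set ν := 1 / ((2 : ℝ) ^ (m + 1) - 1) with hν
  set x := n ^ ν
  have hx0 : 0 < x := Real.rpow_pos_of_pos hn ν
  -- the choice of `ν` is exactly what makes `(n ^ ν) ^ 2 ^ (m + 1) = n ^ (1 + ν)`
  have hx : x ^ 2 ^ (m + 1) = n * x := by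
    have h2 : (1 : ℝ) < 2 ^ (m + 1) := one_lt_pow₀ one_lt_two (Nat.succ_ne_zero m)
    have hexp : ν * (2 : ℝ) ^ (m + 1) = 1 + ν := by
      rw [hν]
      field_simp [(by linarith : (2 : ℝ) ^ (m + 1) - 1 ≠ 0)]
      ring
    rw [← rpow_two_pow, ← Real.rpow_mul hn.le, hexp, Real.rpow_add hn, Real.rpow_one]
  have hsq : ((2 * x) ^ 2 ^ m) ^ 2 = 2 ^ 2 ^ (m + 1) * (n * x) := by
    rw [← pow_mul, ← pow_succ, mul_pow, hx]
  have h4 : (4 : ℝ) ≤ (2 ^ m) ^ 2 * 2 ^ 2 ^ (m + 1) := by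
    have h1 : (1 : ℝ) ≤ (2 ^ m) ^ 2 := one_le_pow₀ (one_le_pow₀ one_le_two)
    have h2 : (4 : ℝ) ≤ 2 ^ 2 ^ (m + 1) := by
      calc (4 : ℝ) = 2 ^ 2 := by norm_num
        _ ≤ 2 ^ 2 ^ (m + 1) := pow_le_pow_right₀ one_le_two
          (by simpa using Nat.pow_le_pow_right two_pos (Nat.succ_pos m))
    nlinarith
  simp_rw [samplingProb_eq hn]
  rw [prod_range_one_div_two_mul_pow_two_pow (by positivity), Real.rpow_add hn, Real.rpow_one]
  calc (n * (2 * x / (2 ^ m * (2 * x) ^ 2 ^ m))) ^ 2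
      = n * x * (4 / ((2 ^ m) ^ 2 * 2 ^ 2 ^ (m + 1))) := by
        rw [mul_pow, div_pow, mul_pow (2 ^ m), hsq]
        field_simp
        ring
    _ ≤ n * x := mul_le_of_le_one_right (by positivity) (div_le_one_of_le₀ h4 (by positivity))

end Sampling

/-- Lemma 2.1: sampling each element of `A_i` into `A_{i+1}` independently with
probability `q_i = n^{-2^i ν} · 2^{-2^i - 1}`, where `ν = 1/(2^k - 1)`, the expected number of
edges of `H = {{u,v} : u ∈ V, v ∈ B(u)}` is at most `C(kn + n^{1+ν})` for an absolute
constant `C`. -/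
theorem statement15 :
    ∃ C : ℝ, 0 < C ∧
      ∀ (V : Type) [Fintype V] [DecidableEq V] (G : SimpleGraph V), G.Connected →
        ∀ w : V → V → ℝ≥0∞, (∀ u v, G.Adj u v → w u v = w v u) →
          (∀ u v, G.Adj u v → w u v ≠ ⊤) →
          ∀ k : ℕ, 1 ≤ k →
            ∀ pv : (Fin (k - 1) → V → Bool) → ℕ → V → V,
              (∀ (ω : Fin (k - 1) → V → Bool) (i : ℕ), i < k → ∀ v : V,
                (Asets k (extendCoins k ω) i).Nonempty →
                  pv ω i v ∈ Asets k (extendCoins k ω) i ∧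
                  ∀ a ∈ Asets k (extendCoins k ω) i,
                    gdist G w v (pv ω i v) ≤ gdist G w v a) →
              ∑ ω : Fin (k - 1) → V → Bool,
                  coinProb k
                    (fun i => (Fintype.card V : ℝ) ^
                        (-((2 : ℝ) ^ i * (1 / ((2 : ℝ) ^ k - 1)))) *
                      (2 : ℝ) ^ (-((2 : ℝ) ^ i) - 1)) ω *
                  ((emulGraph G w (Asets k (extendCoins k ω)) (pv ω) k).edgeSet.ncard : ℝ) ≤
                C * (k * (Fintype.card V : ℝ) +
                  (Fintype.card V : ℝ) ^ ((1 : ℝ) + 1 / ((2 : ℝ) ^ k - 1))) := by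
  refine ⟨33, by norm_num, ?_⟩
  intro V _ _ G hconn w _ _ k _ pv _
  obtain ⟨m, rfl⟩ : ∃ m, k = m + 1 := ⟨k - 1, by omega⟩
  have : Nonempty V := hconn.nonempty
  have hn : (1 : ℝ) ≤ Fintype.card V := by exact_mod_cast Fintype.card_pos
  set n : ℝ := (Fintype.card V : ℝ)
  set ν : ℝ := 1 / ((2 : ℝ) ^ (m + 1) - 1)
  have hν : 0 ≤ ν :=
    div_nonneg zero_le_one (by linarith [one_le_pow₀ (M₀ := ℝ) one_le_two (n := m + 1)])
  refine (sum_coinProb_mul_ncard_edgeSet_le _ (samplingProb_pos (by linarith) ν)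
    (samplingProb_le_half hn hν) G w pv).trans ?_
  have hmid := sum_range_mul_one_add_samplingProb_le (by linarith : 0 < n) ν m
  have htop := sq_mul_prod_samplingProb_le (by linarith : 0 < n) m
  have hN : 0 ≤ n ^ (1 + ν) := Real.rpow_nonneg (by linarith) _
  push_cast
  nlinarith

end ASP
end
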